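/- Let α, β, γ, δ ∈ ℂ satisfy |α|²+|β|² = |γ|²+|δ|² = 1, and consider four qubit registers A, B, C, D in the state |Ψ_init⟩ = (α|0⟩_A + β|1⟩_A) ⊗ (γ|0⟩_B + δ|1⟩_B) ⊗ |Ψ⁺⟩_{CD}. Then for each measurement outcome a ∈ {0,1}, applying CNOT^{(A,C)}, then CNOT^{(B,C)}, then projecting register C onto |a⟩ and applying σ_X^a to register D, yields the vector (1/√2)·[(αγ|00⟩_{AB} + βδ|11⟩_{AB})|0⟩_D + (αδ|01⟩_{AB} + βγ|10⟩_{AB})|1⟩_D]. In particular, the Connection:Add operation Add^{A,B}_{C→D} stores the parity of A and B into register D. -/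

import Mathlib

open scoped TensorProduct

namespace QNC

noncomputable section

/-- The state space of `n` qubit registers: amplitudes on the computational basis. -/
abbrev QState (n : ℕ) : Type := (Fin n → Bool) → ℂ

/-- Computational basis state `|x⟩`. -/
def ket {n : ℕ} (x : Fin n → Bool) : QState n := fun y => if y = x then 1 else 0

/-- The CNOT gate with control register `c` and target register `t`. -/
def CNOTgate {n : ℕ} (c t : Fin n) : QState n →ₗ[ℂ] QState n where
  toFun ψ := fun x => ψ (Function.update x t (xor (x c) (x t)))
  map_add' _ _ := rfl
  map_smul' _ _ := rfl

/-- The Pauli `σ_X` gate on register `i`. -/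
def Xgate {n : ℕ} (i : Fin n) : QState n →ₗ[ℂ] QState n where
  toFun ψ := fun x => ψ (Function.update x i (!(x i)))
  map_add' _ _ := rfl
  map_smul' _ _ := rfl

/-- The Pauli `σ_Z` gate on register `i`. -/
def Zgate {n : ℕ} (i : Fin n) : QState n →ₗ[ℂ] QState n where
  toFun ψ := fun x => if x i then -ψ x else ψ x
  map_add' ψ φ := by funext x; by_cases h : x i <;> simp [h, neg_add] <;> ring
  map_smul' c ψ := by funext x; by_cases h : x i <;> simp [h]

/-- The Hadamard gate on register `i`. -/
def Hgate {n : ℕ} (i : Fin n) : QState n →ₗ[ℂ] QState n where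
  toFun ψ := fun x => (Real.sqrt 2 : ℂ)⁻¹ *
      (ψ (Function.update x i false) + (if x i then -1 else 1) * ψ (Function.update x i true))
  map_add' ψ φ := by funext x; simp only [Pi.add_apply]; ring
  map_smul' c ψ := by
    funext x; simp only [Pi.smul_apply, smul_eq_mul, RingHom.id_apply]; ring

/-- The computational-basis measurement map `|a⟩⟨a|_i ⊗ I` for outcome `a` on register `i`
(the measured register is kept, left in the basis state `|a⟩`, and can be disregarded). -/
def proj {n : ℕ} (i : Fin n) (a : Bool) : QState n →ₗ[ℂ] QState n where
  toFun ψ := fun x => if x i = a then ψ x else 0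
  map_add' ψ φ := by funext x; by_cases h : x i = a <;> simp [h]
  map_smul' c ψ := by funext x; by_cases h : x i = a <;> simp [h]

/-- `σ_X^a` on register `i`. -/
def Xpow {n : ℕ} (a : Bool) (i : Fin n) : QState n →ₗ[ℂ] QState n :=
  if a then Xgate i else LinearMap.id

/-- `σ_Z^a` on register `i`. -/
def Zpow {n : ℕ} (a : Bool) (i : Fin n) : QState n →ₗ[ℂ] QState n :=
  if a then Zgate i else LinearMap.id

/-- The Connection operation `Con^c_{r→t}` with measurement outcome `a`:
apply `CNOT^{(c,r)}`, project register `r` onto `|a⟩`, apply `σ_X^a` to register `t`. -/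
def Con {n : ℕ} (c r t : Fin n) (a : Bool) : QState n →ₗ[ℂ] QState n :=
  Xpow a t ∘ₗ proj r a ∘ₗ CNOTgate c r

/-- The Connection:Add operation `Add^{c₁,c₂}_{r→t}` with measurement outcome `a`:
apply `CNOT^{(c₁,r)}`, then `CNOT^{(c₂,r)}`, project `r` onto `|a⟩`, apply `σ_X^a` to `t`. -/
def AddOp {n : ℕ} (c₁ c₂ r t : Fin n) (a : Bool) : QState n →ₗ[ℂ] QState n :=
  Con c₂ r t a ∘ₗ CNOTgate c₁ r

/-- The Connection:Fanout operation `Fanout^c_{r₁→t₁, r₂→t₂}` with outcomes `a₁, a₂`. -/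
def Fanout {n : ℕ} (c r₁ t₁ r₂ t₂ : Fin n) (a₁ a₂ : Bool) : QState n →ₗ[ℂ] QState n :=
  Con c r₂ t₂ a₂ ∘ₗ Con c r₁ t₁ a₁

/-- The Removal operation `Rem_{r→t}` with measurement outcome `a`:
apply `H` to `r`, project `r` onto `|a⟩`, apply `σ_Z^a` to `t`. -/
def Rem {n : ℕ} (r t : Fin n) (a : Bool) : QState n →ₗ[ℂ] QState n :=
  Zpow a t ∘ₗ proj r a ∘ₗ Hgate r

/-- The Removal:Add operation `RemAdd_{r→t₁,t₂}` with measurement outcome `a`: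
apply `H` to `r`, project `r` onto `|a⟩`, apply `σ_Z^a` to both `t₁` and `t₂`. -/
def RemAdd {n : ℕ} (r t₁ t₂ : Fin n) (a : Bool) : QState n →ₗ[ℂ] QState n :=
  Zpow a t₂ ∘ₗ Zpow a t₁ ∘ₗ proj r a ∘ₗ Hgate r

/-! Every gate involved permutes or annihilates computational basis states, so it suffices to
follow basis kets. On `|p q c c⟩` the two CNOTs write `c ⊕ p ⊕ q` into `C`; the projection onto
`|a⟩` keeps exactly one of the two terms of the Bell pair, the one with `c = a ⊕ p ⊕ q`; and
`σ_X^a` then turns `D = c` into `p ⊕ q`. -/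

variable {n : ℕ}

theorem ket_comp_of_involutive {f : (Fin n → Bool) → Fin n → Bool} (hf : Function.Involutive f)
    (x : Fin n → Bool) : ket x ∘ f = ket (f x) := by
  funext y
  simp only [Function.comp_apply, ket, hf.eq_iff]

theorem involutive_update_xor {c t : Fin n} (h : c ≠ t) :
    Function.Involutive fun x : Fin n → Bool => Function.update x t (xor (x c) (x t)) := by
  intro x
  simp [h]

theorem CNOTgate_ket {c t : Fin n} (h : c ≠ t) (x : Fin n → Bool) :
    CNOTgate c t (ket x) = ket (Function.update x t (xor (x c) (x t))) :=
  ket_comp_of_involutive (involutive_update_xor h) x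

theorem Xpow_ket (a : Bool) (i : Fin n) (x : Fin n → Bool) :
    Xpow a i (ket x) = ket (Function.update x i (xor a (x i))) := by
  cases a
  · simp [Xpow]
  · rw [Bool.true_xor]
    exact ket_comp_of_involutive (fun x => by simp) x

theorem proj_ket (i : Fin n) (a : Bool) (x : Fin n → Bool) :
    proj i a (ket x) = if x i = a then ket x else 0 := by
  funext y
  by_cases ha : x i = a <;> rcases eq_or_ne y x with rfl | hy <;> simp [proj, ket, *]

theorem AddOp_ket {c₁ c₂ r t : Fin n} (h₁ : c₁ ≠ r) (h₂ : c₂ ≠ r) (hrt : r ≠ t) (a : Bool)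
    (x : Fin n → Bool) :
    AddOp c₁ c₂ r t a (ket x) =
      if xor (x c₂) (xor (x c₁) (x r)) = a then
        ket (Function.update (Function.update x r a) t (xor a (x t)))
      else 0 := by
  simp only [AddOp, Con, LinearMap.comp_apply, CNOTgate_ket h₁, CNOTgate_ket h₂,
    Function.update_self, Function.update_of_ne h₂, Function.update_idem, proj_ket]
  split_ifs with hpar
  · rw [Xpow_ket, ← hpar, Function.update_of_ne hrt.symm]
  · exact map_zero _

theorem update_two_update_three (p q c d a e : Bool) :
    Function.update (Function.update ![p, q, c, d] 2 a) 3 e = ![p, q, a, e] := by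
  funext i
  fin_cases i <;> rfl

theorem AddOp_bellPair (p q a : Bool) :
    AddOp (0 : Fin 4) 1 2 3 a (ket ![p, q, false, false] + ket ![p, q, true, true]) =
      ket ![p, q, a, xor p q] := by
  rw [map_add, AddOp_ket (by decide) (by decide) (by decide),
    AddOp_ket (by decide) (by decide) (by decide)]
  simp only [update_two_update_three, Matrix.cons_val_zero, Matrix.cons_val_one,
    Matrix.cons_val_two, Matrix.cons_val_three]
  cases p <;> cases q <;> cases a <;> simp

/-- Registers `A, B, C, D` are `0,…,3`; the measured register `C` is left in `|a⟩`. -/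
theorem add_concrete_general (α β γ δ : ℂ) (a : Bool) :
    AddOp (0 : Fin 4) 1 2 3 a
      ((Real.sqrt 2 : ℂ)⁻¹ •
        ((α * γ) • (ket ![false, false, false, false] + ket ![false, false, true, true])
          + (α * δ) • (ket ![false, true, false, false] + ket ![false, true, true, true])
          + (β * γ) • (ket ![true, false, false, false] + ket ![true, false, true, true])
          + (β * δ) • (ket ![true, true, false, false] + ket ![true, true, true, true])))
    = (Real.sqrt 2 : ℂ)⁻¹ •
        ((α * γ) • ket ![false, false, a, false] + (β * δ) • ket ![true, true, a, false]
          + (α * δ) • ket ![false, true, a, true] + (β * γ) • ket ![true, false, a, true]) := by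
  rw [map_smul, map_add, map_add, map_add]
  simp only [map_smul, AddOp_bellPair, Bool.xor_false, Bool.xor_true, Bool.not_false, Bool.not_true]
  module

/-- **Connection:Add stores the parity of `A` and `B` into `D`.** Registers
`A, B, C, D` are `0,…,3`. Applying `Add^{A,B}_{C→D}` with outcome `a` to
`(α|0⟩_A + β|1⟩_A) ⊗ (γ|0⟩_B + δ|1⟩_B) ⊗ |Ψ⁺⟩_{CD}` yields
`(1/√2)[(αγ|00⟩_{AB} + βδ|11⟩_{AB})|0⟩_D + (αδ|01⟩_{AB} + βγ|10⟩_{AB})|1⟩_D]`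
(with the measured register `C` left in `|a⟩`, to be disregarded). -/
theorem add_concrete (α β γ δ : ℂ)
    (hnorm₁ : ‖α‖ ^ 2 + ‖β‖ ^ 2 = 1)
    (hnorm₂ : ‖γ‖ ^ 2 + ‖δ‖ ^ 2 = 1) (a : Bool) :
    AddOp (0 : Fin 4) 1 2 3 a
      ((Real.sqrt 2 : ℂ)⁻¹ •
        ((α * γ) • (ket ![false, false, false, false] + ket ![false, false, true, true])
          + (α * δ) • (ket ![false, true, false, false] + ket ![false, true, true, true])
          + (β * γ) • (ket ![true, false, false, false] + ket ![true, false, true, true])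
          + (β * δ) • (ket ![true, true, false, false] + ket ![true, true, true, true])))
    = (Real.sqrt 2 : ℂ)⁻¹ •
        ((α * γ) • ket ![false, false, a, false] + (β * δ) • ket ![true, true, a, false]
          + (α * δ) • ket ![false, true, a, true] + (β * γ) • ket ![true, false, a, true]) :=
  add_concrete_general α β γ δ a

end

end QNC
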